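/- arXiv:1401.3574 — 5 statements merged into one kernel-verified Lean document; each statement's English description precedes it below -/
import Mathlib

section
/- Let p be a prime, m a natural number, and k = k' + k'' a decomposition of a natural number k. Then the p-adic valuation of the binomial coefficient C(k, k') is at least v_p(q_k!) − v_p(q_{k'}!) − v_p(q_{k''}!), where q_n = ⌊n/p^m⌋. Equivalently, the rational number ⟨k choose k'⟩ := C(k,k') · q_{k'}! · q_{k''}! / q_k! is a p-adic integer (has nonnegative p-adic valuation). -/
/-- For a prime `p`, `m : ℕ`, and `k = k' + k''`, the `p`-adic valuation of
`C(k, k')` is at least `v_p(q_k!) − v_p(q_{k'}!) − v_p(q_{k''}!)` where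
`q_n = ⌊n/p^m⌋`; equivalently
`v_p(C(k,k')) + v_p(q_{k'}!) + v_p(q_{k''}!) ≥ v_p(q_k!)`. -/
theorem stmt_2 (p m k k' k'' : ℕ) (hp : p.Prime) (hk : k = k' + k'') :
    padicValNat p (Nat.factorial (k / p ^ m)) ≤
      padicValNat p (Nat.choose k k') +
        padicValNat p (Nat.factorial (k' / p ^ m)) +
        padicValNat p (Nat.factorial (k'' / p ^ m)) := by
  haveI : Fact p.Prime := ⟨hp⟩
  subst hk
  set k := k' + k'' with hk
  set C : ℕ := Nat.log p k + 1 with hC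
  set B : ℕ := m + C with hB
  have hk'le : k' ≤ k := Nat.le_add_right _ _
  have hk''le : k'' ≤ k := Nat.le_add_left _ _
  -- Legendre for the divided factorials
  have hdiv : ∀ n : ℕ, n ≤ k → padicValNat p (Nat.factorial (n / p ^ m)) =
      ∑ i ∈ Finset.Ico 1 C, n / p ^ (m + i) := by
    intro n hn
    rw [padicValNat_factorial (p := p) (b := C)
      (lt_of_le_of_lt (Nat.log_mono_right ((Nat.div_le_self _ _).trans hn)) (Nat.lt_succ_self _))]
    refine Finset.sum_congr rfl fun i _ => ?_
    rw [Nat.div_div_eq_div_mul, ← pow_add]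
  -- Legendre for full factorials with bound B
  have hfull : ∀ n : ℕ, n ≤ k → padicValNat p (Nat.factorial n) =
      ∑ i ∈ Finset.Ico 1 B, n / p ^ i := by
    intro n hn
    exact padicValNat_factorial (p := p)
      (lt_of_le_of_lt (Nat.log_mono_right hn) (by omega))
  -- split the full sum
  have hsplit : ∀ n : ℕ, ∑ i ∈ Finset.Ico 1 B, n / p ^ i =
      (∑ i ∈ Finset.Ico 1 (m + 1), n / p ^ i) + ∑ i ∈ Finset.Ico 1 C, n / p ^ (m + i) := by
    intro n
    rw [← Finset.sum_Ico_consecutive (fun i => n / p ^ i) (by omega : 1 ≤ m + 1)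
      (by omega : m + 1 ≤ B)]
    congr 1
    rw [show m + 1 = 1 + m by omega, show B = C + m by omega,
      Finset.sum_Ico_add (fun i => n / p ^ i) 1 C m]
  -- v_p(k!) = v_p(choose) + v_p(k'!) + v_p(k''!)
  have hchoose : padicValNat p (Nat.factorial k) =
      padicValNat p (Nat.choose k k') + padicValNat p (Nat.factorial k')
        + padicValNat p (Nat.factorial k'') := by
    have h := Nat.choose_mul_factorial_mul_factorial hk'le
    rw [show k - k' = k'' by omega] at h
    rw [← h, padicValNat.mul (mul_ne_zero (Nat.choose_pos hk'le).ne' (Nat.factorial_ne_zero _))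
        (Nat.factorial_ne_zero _),
      padicValNat.mul (Nat.choose_pos hk'le).ne' (Nat.factorial_ne_zero _)]
  -- tail sums termwise inequality
  have htail : (∑ i ∈ Finset.Ico 1 (m+1), k' / p ^ i) + (∑ i ∈ Finset.Ico 1 (m+1), k'' / p ^ i)
      ≤ ∑ i ∈ Finset.Ico 1 (m+1), k / p ^ i := by
    rw [← Finset.sum_add_distrib]
    exact Finset.sum_le_sum fun i _ => Nat.add_div_le_add_div _ _ _
  have hA := hfull k le_rfl; rw [hsplit] at hA
  have hA' := hfull k' hk'le; rw [hsplit] at hA'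
  have hA'' := hfull k'' hk''le; rw [hsplit] at hA''
  rw [hdiv k le_rfl, hdiv k' hk'le, hdiv k'' hk''le]
  omega
end

section
/- Let p be a prime, m a natural number, k ≥ 1 a natural number, and t a natural number with 0 < t < p^{m+1}. Then the sum of base-p digits satisfies σ_p(t) + σ_p(p^{m+1}·k − t) > σ_p(p^{m+1}·k). -/
/-- For a prime `p`, `m : ℕ`, `k ≥ 1` and `0 < t < p^{m+1}`, the base-`p`
digit sums satisfy `σ_p(t) + σ_p(p^{m+1}·k − t) > σ_p(p^{m+1}·k)`. -/
theorem stmt_6 (p m k t : ℕ) (hp : p.Prime) (hk : 1 ≤ k)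
    (ht1 : 0 < t) (ht2 : t < p ^ (m + 1)) :
    (Nat.digits p (p ^ (m + 1) * k)).sum <
      (Nat.digits p t).sum + (Nat.digits p (p ^ (m + 1) * k - t)).sum := by
  haveI : Fact p.Prime := ⟨hp⟩
  set n := p ^ (m + 1) * k with hn
  have hnpos : 0 < n := Nat.mul_pos (Nat.pow_pos hp.pos) hk
  have htn : t ≤ n := le_trans ht2.le (Nat.le_mul_of_pos_right _ hk)
  -- p divides choose n t
  have hkey : t * Nat.choose n t = n * Nat.choose (n - 1) (t - 1) := by
    have h := Nat.add_one_mul_choose_eq (n - 1) (t - 1)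
    rw [Nat.sub_add_cancel hnpos,
        Nat.sub_add_cancel ht1] at h
    rw [mul_comm]; exact h.symm
  have hCpos : 0 < Nat.choose n t := Nat.choose_pos htn
  have hdvd : p ∣ Nat.choose n t := by
    by_contra hpd
    have hv0 : padicValNat p (Nat.choose n t) = 0 :=
      padicValNat.eq_zero_of_not_dvd hpd
    have hvt : padicValNat p t ≤ m := by
      by_contra h
      have : p ^ (m + 1) ∣ t := (padicValNat_dvd_iff_le (by omega)).mpr (by omega)
      have := Nat.le_of_dvd ht1 this
      omega
    have hvn : m + 1 ≤ padicValNat p n := by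
      have : p ^ (m + 1) ∣ n := Dvd.intro k rfl
      exact (padicValNat_dvd_iff_le hnpos.ne').mp this
    have heq : padicValNat p (t * Nat.choose n t)
        = padicValNat p (n * Nat.choose (n - 1) (t - 1)) := by rw [hkey]
    rw [padicValNat.mul (by omega) (by omega),
        padicValNat.mul (by omega) (Nat.choose_pos (by omega)).ne'] at heq
    omega
  have hv1 : 1 ≤ padicValNat p (Nat.choose n t) :=
    (padicValNat_dvd_iff_le hCpos.ne').mp (by simpa using hdvd)
  have hkum := sub_one_mul_padicValNat_choose_eq_sub_sum_digits (p := p) htn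
  have hp2 : 2 ≤ p := hp.two_le
  have : 1 ≤ (p - 1) * padicValNat p (Nat.choose n t) :=
    Nat.one_le_iff_ne_zero.mpr (Nat.mul_ne_zero (by omega) (by omega))
  omega
end

section
/- Let p be a prime, m a natural number, k ≥ 1, and let s, l be natural numbers with 0 ≤ s < l ≤ p^{m+1}. Then the rational number [(p^{m+1}k + s)! / ((l−s)!·s!·(p^{m+1}k − l + s)!)] · [(pk)!·⌊l/p^m⌋! / (pk + ⌊s/p^m⌋)!] has p-adic valuation at least 1. -/
-- aux: valuation of factorial stable under adding < p to multiple of p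
theorem fact_val_stable (p k : ℕ) (hp : p.Prime) :
    ∀ j, j < p → padicValNat p ((p * k + j).factorial) = padicValNat p ((p * k).factorial) := by
  haveI := Fact.mk hp
  intro j
  induction j with
  | zero => intro; rfl
  | succ j ih =>
    intro hj
    have h1 : (p * k + (j + 1)).factorial = (p * k + j + 1) * (p * k + j).factorial := by
      rw [← Nat.factorial_succ]; ring_nf
    rw [h1, padicValNat.mul (by positivity) (Nat.factorial_pos _).ne',
      ih (by omega)]
    have hnd : ¬ p ∣ (p * k + j + 1) := by
      intro h
      have : p ∣ (j + 1) := by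
        have := (Nat.dvd_add_right ⟨k, rfl⟩).mp (by rwa [add_assoc] at h)
        exact this
      have := Nat.le_of_dvd (by omega) this
      omega
    rw [padicValNat.eq_zero_of_not_dvd hnd]; omega

theorem choose_val (p m k t : ℕ) (hp : p.Prime) (hk : 1 ≤ k) (ht0 : 0 < t)
    (ht : t < p ^ (m + 1)) :
    1 ≤ padicValNat p (Nat.choose (p ^ (m + 1) * k) t) := by
  haveI := Fact.mk hp
  set N := p ^ (m + 1) * k with hN
  have hpp : 0 < p ^ (m + 1) := pow_pos hp.pos _
  have hN1 : 1 ≤ N := by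
    have := Nat.mul_le_mul (le_refl (p ^ (m + 1))) hk
    simp at this; omega
  have htN : t ≤ N := by
    calc t ≤ p ^ (m + 1) := ht.le
    _ ≤ p ^ (m + 1) * k := Nat.le_mul_of_pos_right _ hk
  have key : N * Nat.choose (N - 1) (t - 1) = Nat.choose N t * t := by
    have := Nat.add_one_mul_choose_eq (N - 1) (t - 1)
    have e1 : N - 1 + 1 = N := Nat.succ_pred_eq_of_pos hN1
    have e2 : t - 1 + 1 = t := Nat.succ_pred_eq_of_pos ht0
    rwa [e1, e2] at this
  have hch1 : 0 < Nat.choose (N - 1) (t - 1) := Nat.choose_pos (by omega)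
  have hch2 : 0 < Nat.choose N t := Nat.choose_pos htN
  have hv := congrArg (padicValNat p) key
  rw [padicValNat.mul (by omega) hch1.ne', padicValNat.mul hch2.ne' ht0.ne'] at hv
  have hvN : m + 1 ≤ padicValNat p N := by
    rw [hN, padicValNat.mul (by omega) (by omega), padicValNat.prime_pow]
    omega
  have hvt : padicValNat p t ≤ m := by
    by_contra h
    have hd : p ^ (m + 1) ∣ t :=
      dvd_trans (pow_dvd_pow p (by omega)) (pow_padicValNat_dvd)
    have := Nat.le_of_dvd ht0 hd
    omega
  omega

/-- For a prime `p`, `m : ℕ`, `k ≥ 1`, and `0 ≤ s < l ≤ p^{m+1}`, the rational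
number `[(p^{m+1}k + s)! / ((l−s)!·s!·(p^{m+1}k − l + s)!)] ·
[(pk)!·⌊l/p^m⌋! / (pk + ⌊s/p^m⌋)!]` has `p`-adic valuation at least `1`. -/
theorem stmt_7 (p m k s l : ℕ) (hp : p.Prime) (hk : 1 ≤ k)
    (hs : s < l) (hl : l ≤ p ^ (m + 1)) :
    1 ≤ padicValRat p
      ((((p ^ (m + 1) * k + s).factorial : ℚ) /
          (((l - s).factorial : ℚ) * (s.factorial : ℚ) *
            ((p ^ (m + 1) * k - l + s).factorial : ℚ))) *
        ((((p * k).factorial : ℚ) * ((l / p ^ m).factorial : ℚ)) /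
          (((p * k + s / p ^ m).factorial : ℚ)))) := by
  haveI := Fact.mk hp
  have hpm : 0 < p ^ m := pow_pos hp.pos m
  have hpm1 : 0 < p ^ (m + 1) := pow_pos hp.pos (m + 1)
  set N := p ^ (m + 1) * k with hN
  set t := l - s with ht
  set a := s / p ^ m with ha
  set b := l / p ^ m with hb
  have hlN : l ≤ N := le_trans hl (Nat.le_mul_of_pos_right _ hk)
  have htN : t ≤ N := by omega
  have hNls : N - l + s = N - t := by omega
  set C1 := (N + s).choose s with hC1
  set C2 := N.choose t with hC2
  have hC1pos : 0 < C1 := Nat.choose_pos (by omega)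
  have hC2pos : 0 < C2 := Nat.choose_pos htN
  have f1 : ((N + s).factorial : ℚ) = (C1 : ℚ) * s.factorial * N.factorial := by
    have := Nat.choose_mul_factorial_mul_factorial (Nat.le_add_left s N)
    rw [Nat.add_sub_cancel] at this
    exact_mod_cast this.symm
  have f2 : ((N).factorial : ℚ) = (C2 : ℚ) * t.factorial * (N - t).factorial := by
    have := Nat.choose_mul_factorial_mul_factorial htN
    exact_mod_cast this.symm
  have eqE : (((N + s).factorial : ℚ) /
        ((t.factorial : ℚ) * (s.factorial : ℚ) * ((N - l + s).factorial : ℚ))) *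
        ((((p * k).factorial : ℚ) * (b.factorial : ℚ)) / (((p * k + a).factorial : ℚ))) =
      ((C1 * C2 * b.factorial * (p * k).factorial : ℕ) : ℚ) /
        (((p * k + a).factorial : ℕ) : ℚ) := by
    rw [hNls, f1, f2]
    have h1 : (t.factorial : ℚ) ≠ 0 := Nat.cast_ne_zero.mpr (Nat.factorial_pos _).ne'
    have h2 : (s.factorial : ℚ) ≠ 0 := Nat.cast_ne_zero.mpr (Nat.factorial_pos _).ne'
    have h3 : (((N - t).factorial : ℕ) : ℚ) ≠ 0 := Nat.cast_ne_zero.mpr (Nat.factorial_pos _).ne'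
    have h4 : (((p * k + a).factorial : ℕ) : ℚ) ≠ 0 := Nat.cast_ne_zero.mpr (Nat.factorial_pos _).ne'
    push_cast
    field_simp
  rw [eqE]
  have hnum : (C1 * C2 * b.factorial * (p * k).factorial : ℕ) ≠ 0 := by positivity
  rw [padicValRat.div (by exact_mod_cast hnum) (Nat.cast_ne_zero.mpr (Nat.factorial_pos _).ne'),
    padicValRat.of_nat, padicValRat.of_nat]
  have hap : a < p := by
    have : s < p ^ m * p := by
      have : p ^ (m + 1) = p ^ m * p := pow_succ p m
      omega
    exact Nat.div_lt_of_lt_mul this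
  have hden : padicValNat p ((p * k + a).factorial) = padicValNat p ((p * k).factorial) :=
    fact_val_stable p k hp a hap
  have hnumv : padicValNat p (C1 * C2 * b.factorial * (p * k).factorial) =
      padicValNat p C1 + padicValNat p C2 + padicValNat p b.factorial +
        padicValNat p (p * k).factorial := by
    rw [padicValNat.mul (by positivity) (Nat.factorial_pos _).ne',
      padicValNat.mul (by positivity) (Nat.factorial_pos _).ne',
      padicValNat.mul hC1pos.ne' hC2pos.ne']
  have key : 1 ≤ padicValNat p C2 + padicValNat p b.factorial := by
    rcases lt_or_eq_of_le (show t ≤ p ^ (m + 1) by omega) with h | h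
    · have h2 := choose_val p m k t hp hk (by omega) h
      have h3 : (p ^ (m + 1) * k).choose t = C2 := rfl
      rw [h3] at h2
      omega
    · have hs0 : s = 0 ∧ l = p ^ (m + 1) := by
        have h' : l - s = p ^ (m + 1) := h
        have h'' : l ≤ p ^ (m + 1) := hl
        generalize hq : p ^ (m + 1) = P at h' h''
        omega
      have hbp : b = p := by
        rw [hb, hs0.2, pow_succ, Nat.mul_div_cancel_left _ hpm]
      have hp1 : p = (p - 1) + 1 := by have := hp.pos; omega
      have hfp : p.factorial = p * (p - 1).factorial := by
        conv_lhs => rw [hp1]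
        rw [Nat.factorial_succ, ← hp1]
      have : padicValNat p p.factorial = 1 := by
        rw [hfp, padicValNat.mul hp.pos.ne' (Nat.factorial_pos _).ne',
          padicValNat.self hp.one_lt, padicValNat.eq_zero_of_not_dvd]
        intro hd
        have := (Nat.Prime.dvd_factorial hp).mp hd
        omega
      rw [hbp, this]
      omega
  rw [hnumv, hden]
  omega
end

section
/- Let p be a prime and m a natural number. Let A be a commutative ring of characteristic p, and let (I, J, γ) be an m-PD ideal of A (so γ is a divided power structure on J and I^{(p^m)} + pI ⊆ J ⊆ I). Then for all x, y ∈ I, the element (x+y)^{\{p^{m+1}\}} − x^{\{p^{m+1}\}} − y^{\{p^{m+1}\}} lies in the ideal I², where z^{\{p^{m+1}\}} := γ_p(z^{p^m}) for z ∈ I. -/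
/-- Let `A` be a commutative ring of characteristic `p` and `(I, J, γ)` an
`m`-PD ideal of `A`. Then for all `x, y ∈ I`, the element
`(x+y)^{\{p^{m+1}\}} − x^{\{p^{m+1}\}} − y^{\{p^{m+1}\}}` lies in `I²`,
where `z^{\{p^{m+1}\}} = γ_p(z^{p^m})`. -/
theorem stmt_13 (p m : ℕ) (hp : p.Prime) {A : Type*} [CommRing A]
    [CharP A p] (I J : Ideal A) (γ : DividedPowers J)
    (h1 : Ideal.span ((fun a => a ^ p ^ m) '' (I : Set A)) +
          Ideal.span ((fun a => (p : A) * a) '' (I : Set A)) ≤ J)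
    (h2 : J ≤ I) :
    ∀ x ∈ I, ∀ y ∈ I,
      γ.dpow p ((x + y) ^ p ^ m) - γ.dpow p (x ^ p ^ m) -
        γ.dpow p (y ^ p ^ m) ∈ I ^ 2 := by
  have : Fact p.Prime := ⟨hp⟩
  have hp2 := hp.two_le
  intro x hx y hy
  have hspan : Ideal.span ((fun a => a ^ p ^ m) '' (I : Set A)) ≤ J :=
    le_sup_left.trans h1
  have ha : x ^ p ^ m ∈ J := hspan (Ideal.subset_span ⟨x, hx, rfl⟩)
  have hb : y ^ p ^ m ∈ J := hspan (Ideal.subset_span ⟨y, hy, rfl⟩)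
  rw [add_pow_char_pow, γ.dpow_add' (n := p) ha hb, Finset.sum_range_succ']
  obtain ⟨q, hq⟩ : ∃ q, p = q + 1 + 1 := ⟨p - 2, by omega⟩
  rw [γ.dpow_zero ha, one_mul, Nat.sub_zero]
  nth_rewrite 1 [hq]
  rw [Finset.sum_range_succ, ← hq, Nat.sub_self, γ.dpow_zero hb, mul_one]
  have heq : (∑ k ∈ Finset.range (q + 1), γ.dpow (k + 1) (x ^ p ^ m) *
      γ.dpow (p - (k + 1)) (y ^ p ^ m)) + γ.dpow p (x ^ p ^ m) +
      γ.dpow p (y ^ p ^ m) - γ.dpow p (x ^ p ^ m) - γ.dpow p (y ^ p ^ m)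
      = ∑ k ∈ Finset.range (q + 1), γ.dpow (k + 1) (x ^ p ^ m) *
      γ.dpow (p - (k + 1)) (y ^ p ^ m) := by ring
  rw [heq]
  apply Ideal.sum_mem
  intro i hi
  rw [sq]
  have hi' : i < q + 1 := Finset.mem_range.mp hi
  exact Ideal.mul_mem_mul (h2 (γ.dpow_mem (Nat.succ_ne_zero i) ha))
    (h2 (γ.dpow_mem (by omega) hb))
end

section
/- Let p be a prime and m a natural number, and let k', k'' be natural numbers with k = k' + k''. Suppose further that q_{k'} + q_{k''} = q_k where q_n = ⌊n/p^m⌋. Then v_p(C(k, k')) ≥ v_p(C(q_k, q_{k'})), where v_p is the p-adic valuation. -/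
open Finset Nat

/-- For a prime `p`, `m : ℕ`, and `k = k' + k''` with
`q_{k'} + q_{k''} = q_k` (where `q_n = ⌊n/p^m⌋`), one has
`v_p(C(k, k')) ≥ v_p(C(q_k, q_{k'}))`. -/
theorem stmt_16 (p m k k' k'' : ℕ) (hp : p.Prime) (hk : k = k' + k'')
    (hq : k' / p ^ m + k'' / p ^ m = k / p ^ m) :
    padicValNat p (Nat.choose (k / p ^ m) (k' / p ^ m)) ≤
      padicValNat p (Nat.choose k k') := by
  have hkn : k' ≤ k := by omega
  have hqn : k' / p ^ m ≤ k / p ^ m := hq ▸ Nat.le_add_right _ _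
  set b := Nat.log p k + 1 with hb
  have hbk : Nat.log p k < b := Nat.lt_succ_self _
  have hbq : Nat.log p (k / p ^ m) < b :=
    lt_of_le_of_lt (Nat.log_mono_right (Nat.div_le_self _ _)) hbk
  have hbk' : Nat.log p k < b + m := by omega
  have h1 := hp.emultiplicity_choose hqn hbq
  have h2 := hp.emultiplicity_choose hkn hbk'
  have hsub : k - k' = k'' := by omega
  have hqsub : k / p ^ m - k' / p ^ m = k'' / p ^ m := by
    rw [← hq, Nat.add_sub_cancel_left]
  rw [hsub] at h2
  rw [hqsub] at h1
  have hcard : #{i ∈ Ico 1 b | p ^ i ≤ k' / p ^ m % p ^ i + k'' / p ^ m % p ^ i} ≤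
      #{i ∈ Ico 1 (b + m) | p ^ i ≤ k' % p ^ i + k'' % p ^ i} := by
    apply Finset.card_le_card_of_injOn (fun i => i + m)
    · intro i hi
      simp only [mem_coe, mem_filter, mem_Ico] at hi ⊢
      obtain ⟨⟨h1i, h2i⟩, h3i⟩ := hi
      refine ⟨⟨by omega, by omega⟩, ?_⟩
      have key : ∀ n : ℕ, (n / p ^ m % p ^ i) * p ^ m ≤ n % p ^ (i + m) := by
        intro n
        have : n % p ^ (i + m) = n % (p ^ m * p ^ i) := by rw [← pow_add, add_comm]
        rw [this]
        calc (n / p ^ m % p ^ i) * p ^ m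
            = (n % (p ^ m * p ^ i) / p ^ m) * p ^ m := by
              rw [Nat.mod_mul_right_div_self]
          _ ≤ n % (p ^ m * p ^ i) := Nat.div_mul_le_self _ _
      calc p ^ (i + m) = p ^ i * p ^ m := by rw [pow_add]
        _ ≤ (k' / p ^ m % p ^ i + k'' / p ^ m % p ^ i) * p ^ m :=
            Nat.mul_le_mul_right _ h3i
        _ = (k' / p ^ m % p ^ i) * p ^ m + (k'' / p ^ m % p ^ i) * p ^ m := by ring
        _ ≤ k' % p ^ (i + m) + k'' % p ^ (i + m) := Nat.add_le_add (key k') (key k'')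
    · intro a _ c _ h
      simpa using h
  haveI : Fact p.Prime := ⟨hp⟩
  have hne1 : Nat.choose (k / p ^ m) (k' / p ^ m) ≠ 0 := (Nat.choose_pos hqn).ne'
  have hne2 : Nat.choose k k' ≠ 0 := (Nat.choose_pos hkn).ne'
  rw [← Nat.cast_le (α := ℕ∞), padicValNat_eq_emultiplicity hne1,
    padicValNat_eq_emultiplicity hne2, h1, h2]
  exact_mod_cast hcard
end
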